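/- Let K be a field of characteristic different from 2. Let U₁(K) be the set of points [t : z₀ : z₁ : z₂ : z₃] ∈ ℙ⁴(K) with z₀⁴ − z₁⁴ + z₂⁴ − z₃⁴ = 0, t ≠ 0 and z₀² + z₁² ≠ 0, and let U₂(K) be the set of points [Y₀ : Y₁ : Y₂ : Y₃ : X₀ : X₁ : X₂ : X₃] ∈ Z(K) with Y₀² + Y₁² ≠ 0 and X₃ ≠ 0. Then the map φ sending [t : z₀ : z₁ : z₂ : z₃] to [2z₀ : 2z₁ : 2z₂ : 2z₃ : (z₀² + z₁²)/t : (−z₂² + z₃²)/t : t(z₂² + z₃²)/(z₀² + z₁²) : t] is a well-defined bijection from U₁(K) onto U₂(K), with inverse sending [Y₀ : Y₁ : Y₂ : Y₃ : X₀ : X₁ : X₂ : X₃] to [X₃ : Y₀/2 : Y₁/2 : Y₂/2 : Y₃/2]. -/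

import Mathlib

/-- The tangent cone condition on coordinates `(t, z₀, z₁, z₂, z₃) = (v 0, …, v 4)`:
`z₀⁴ - z₁⁴ + z₂⁴ - z₃⁴ = 0`. -/
def ConeCond {K : Type*} [Field K] (v : Fin 5 → K) : Prop :=
  v 1 ^ 4 - v 2 ^ 4 + v 3 ^ 4 - v 4 ^ 4 = 0

/-- The defining condition of the Satake model `Z` in coordinates
`(Y₀, Y₁, Y₂, Y₃, X₀, X₁, X₂, X₃) = (w 0, …, w 7)`. -/
def SatakeCond {K : Type*} [Field K] (w : Fin 8 → K) : Prop :=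
  w 0 ^ 2 = 2 * (w 4 * w 7 + w 5 * w 6) ∧
  w 1 ^ 2 = 2 * (w 4 * w 7 - w 5 * w 6) ∧
  w 2 ^ 2 = 2 * (w 4 * w 6 - w 5 * w 7) ∧
  w 3 ^ 2 = 2 * (w 4 * w 6 + w 5 * w 7)

/-- Homogeneous coordinates of a point of `U₁`: a nonzero vector on the cone with
`t ≠ 0` and `z₀² + z₁² ≠ 0`. -/
def U1Cond {K : Type*} [Field K] (v : Fin 5 → K) : Prop :=
  v ≠ 0 ∧ ConeCond v ∧ v 0 ≠ 0 ∧ v 1 ^ 2 + v 2 ^ 2 ≠ 0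

/-- Homogeneous coordinates of a point of `U₂`: a nonzero vector on `Z` with
`Y₀² + Y₁² ≠ 0` and `X₃ ≠ 0`. -/
def U2Cond {K : Type*} [Field K] (w : Fin 8 → K) : Prop :=
  w ≠ 0 ∧ SatakeCond w ∧ w 0 ^ 2 + w 1 ^ 2 ≠ 0 ∧ w 7 ≠ 0

/-- The birational map `φ` of van Geemen–Nygaard, in homogeneous coordinates:
`[t : z₀ : z₁ : z₂ : z₃] ↦
 [2z₀ : 2z₁ : 2z₂ : 2z₃ : (z₀² + z₁²)/t : (-z₂² + z₃²)/t : t(z₂² + z₃²)/(z₀² + z₁²) : t]`. -/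
def phiVGN {K : Type*} [Field K] (v : Fin 5 → K) : Fin 8 → K :=
  ![2 * v 1, 2 * v 2, 2 * v 3, 2 * v 4,
    (v 1 ^ 2 + v 2 ^ 2) / v 0, (-(v 3 ^ 2) + v 4 ^ 2) / v 0,
    v 0 * (v 3 ^ 2 + v 4 ^ 2) / (v 1 ^ 2 + v 2 ^ 2), v 0]

/-- The inverse map: `[Y₀ : Y₁ : Y₂ : Y₃ : X₀ : X₁ : X₂ : X₃] ↦ [X₃ : Y₀/2 : Y₁/2 : Y₂/2 : Y₃/2]`. -/
def psiVGN {K : Type*} [Field K] (w : Fin 8 → K) : Fin 5 → K :=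
  ![w 7, w 0 / 2, w 1 / 2, w 2 / 2, w 3 / 2]

/-!
On `Z` the four quadrics combine to `Y₀² + Y₁² = 4X₀X₃`, `Y₃² − Y₂² = 4X₁X₃` and
`Y₂² + Y₃² = 4X₀X₂`, so once `X₃ ≠ 0` and `Y₀² + Y₁² ≠ 0` the coordinates `X₀, X₁, X₂` are
recovered from `Y` and `X₃` by exactly the formulas defining `φ`; hence `φ ∘ ψ` is the identity
on `U₂`. Conversely `ψ ∘ φ` is visibly the identity, and the same relations give
`Y₀⁴ − Y₁⁴ + Y₂⁴ − Y₃⁴ = 0` on `Z`, so `ψ` lands on the cone.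
-/

section

variable {K : Type*} [Field K]

namespace SatakeCond

variable {w : Fin 8 → K}

theorem sq_zero_add_sq_one (hw : SatakeCond w) : w 0 ^ 2 + w 1 ^ 2 = 4 * (w 4 * w 7) := by
  linear_combination hw.1 + hw.2.1

theorem sq_zero_sub_sq_one (hw : SatakeCond w) : w 0 ^ 2 - w 1 ^ 2 = 4 * (w 5 * w 6) := by
  linear_combination hw.1 - hw.2.1

theorem sq_two_add_sq_three (hw : SatakeCond w) : w 2 ^ 2 + w 3 ^ 2 = 4 * (w 4 * w 6) := by
  linear_combination hw.2.2.1 + hw.2.2.2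

theorem sq_three_sub_sq_two (hw : SatakeCond w) : w 3 ^ 2 - w 2 ^ 2 = 4 * (w 5 * w 7) := by
  linear_combination hw.2.2.2 - hw.2.2.1

theorem quartic (hw : SatakeCond w) : w 0 ^ 4 - w 1 ^ 4 + w 2 ^ 4 - w 3 ^ 4 = 0 := by
  linear_combination (w 0 ^ 2 - w 1 ^ 2) * hw.sq_zero_add_sq_one
    + 4 * (w 4 * w 7) * hw.sq_zero_sub_sq_one
    - (w 3 ^ 2 - w 2 ^ 2) * hw.sq_two_add_sq_three
    - 4 * (w 4 * w 6) * hw.sq_three_sub_sq_two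

end SatakeCond

theorem coneCond_psiVGN {w : Fin 8 → K} (hw : SatakeCond w) : ConeCond (psiVGN w) := by
  simp only [ConeCond, psiVGN, Fin.isValue, Matrix.cons_val_one, Matrix.cons_val_zero,
    Matrix.cons_val]
  linear_combination (2⁻¹ : K) ^ 4 * hw.quartic

theorem satakeCond_phiVGN {v : Fin 5 → K} (hv : ConeCond v) (ht : v 0 ≠ 0)
    (hz : v 1 ^ 2 + v 2 ^ 2 ≠ 0) : SatakeCond (phiVGN v) := by
  unfold ConeCond at hv
  simp only [SatakeCond, phiVGN, Fin.isValue, Matrix.cons_val_zero, Matrix.cons_val,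
    Matrix.cons_val_one]
  refine ⟨?_, ?_, ?_, ?_⟩ <;> field_simp
  · linear_combination 2 * hv
  · linear_combination -2 * hv
  · ring
  · ring

theorem psiVGN_phiVGN [NeZero (2 : K)] (v : Fin 5 → K) : psiVGN (phiVGN v) = v := by
  ext i
  fin_cases i <;> simp [psiVGN, phiVGN, mul_div_cancel_left₀ _ (two_ne_zero' K)]

theorem U1Cond.u2Cond_phiVGN [NeZero (2 : K)] {v : Fin 5 → K} (hv : U1Cond v) :
    U2Cond (phiVGN v) := by
  obtain ⟨-, hc, ht, hz⟩ := hv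
  refine ⟨fun h ↦ ht (by simpa [phiVGN] using congrFun h 7), satakeCond_phiVGN hc ht hz, ?_, ht⟩
  have h : (2 * v 1) ^ 2 + (2 * v 2) ^ 2 = 2 ^ 2 * (v 1 ^ 2 + v 2 ^ 2) := by ring
  simpa [phiVGN, h, two_ne_zero] using hz

theorem U2Cond.u1Cond_psiVGN [NeZero (2 : K)] {w : Fin 8 → K} (hw : U2Cond w) :
    U1Cond (psiVGN w) := by
  obtain ⟨-, hs, hy, hx⟩ := hw
  refine ⟨fun h ↦ hx (by simpa [psiVGN] using congrFun h 0), coneCond_psiVGN hs, hx, ?_⟩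
  have h : (w 0 / 2) ^ 2 + (w 1 / 2) ^ 2 = (w 0 ^ 2 + w 1 ^ 2) * 2⁻¹ ^ 2 := by ring
  simpa [psiVGN, h, two_ne_zero] using hy

theorem U2Cond.phiVGN_psiVGN [NeZero (2 : K)] {w : Fin 8 → K} (hw : U2Cond w) :
    phiVGN (psiVGN w) = w := by
  have hy : (w 0 / 2) ^ 2 + (w 1 / 2) ^ 2 ≠ 0 := by
    simpa [psiVGN] using hw.u1Cond_psiVGN.2.2.2
  obtain ⟨-, hs, -, hx⟩ := hw
  ext i
  fin_cases i <;>
    simp only [phiVGN, psiVGN, Fin.isValue, Matrix.cons_val_one, Matrix.cons_val_zero,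
      Matrix.cons_val, Fin.zero_eta, Fin.mk_one, Fin.reduceFinMk, mul_div_cancel₀ _ (two_ne_zero' K)]
  · rw [div_eq_iff hx]
    field_simp
    linear_combination hs.sq_zero_add_sq_one
  · rw [div_eq_iff hx]
    field_simp
    linear_combination hs.sq_three_sub_sq_two
  · rw [div_eq_iff hy]
    field_simp
    linear_combination w 7 * hs.sq_two_add_sq_three - w 6 * hs.sq_zero_add_sq_one

end

/-- Over any field `K` of characteristic `≠ 2`, the map `φ` is a well-defined bijection
`U₁(K) → U₂(K)` of projective point sets, with inverse `ψ`:  `φ` maps homogeneous coordinates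
of points of `U₁` to homogeneous coordinates of points of `U₂`, `ψ` conversely, and the two
composites are the identity up to a nonzero scalar (i.e. projectively). -/
theorem phi_bijection (K : Type*) [Field K] (hK : ringChar K ≠ 2) :
    (∀ v : Fin 5 → K, U1Cond v →
        U2Cond (phiVGN v) ∧ ∃ c : K, c ≠ 0 ∧ psiVGN (phiVGN v) = c • v) ∧
    (∀ w : Fin 8 → K, U2Cond w →
        U1Cond (psiVGN w) ∧ ∃ c : K, c ≠ 0 ∧ phiVGN (psiVGN w) = c • w) := by
  have : NeZero (2 : K) := ⟨Ring.two_ne_zero hK⟩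
  refine ⟨fun v hv ↦ ⟨hv.u2Cond_phiVGN, 1, one_ne_zero, ?_⟩,
    fun w hw ↦ ⟨hw.u1Cond_psiVGN, 1, one_ne_zero, ?_⟩⟩
  · rw [one_smul, psiVGN_phiVGN]
  · rw [one_smul, hw.phiVGN_psiVGN]
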